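/- arXiv:2103.02895 — 3 statements merged into one kernel-verified Lean document; each statement's English description precedes it below -/
import Mathlib

section
/- The Rényi divergence of order α > 1 between two Gaussian distributions N(μ₀, σ²) and N(μ₁, σ²) equals α·(μ₀ − μ₁)²/(2σ²). Consequently, the Gaussian mechanism with sensitivity Δf and noise scale σ satisfies (α, ε_RDP)-RDP with ε_RDP = α·Δf²/(2σ²). -/
open MeasureTheory Real

/-- Density of the Gaussian distribution `N(μ, σ²)`. -/
noncomputable def gaussPDF (μ σ x : ℝ) : ℝ :=
  (Real.sqrt (2 * Real.pi * σ ^ 2))⁻¹ * Real.exp (-(x - μ) ^ 2 / (2 * σ ^ 2))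

/-- Rényi divergence of order `α` between densities `P` and `Q` w.r.t. Lebesgue. -/
noncomputable def renyiDiv (α : ℝ) (P Q : ℝ → ℝ) : ℝ :=
  (α - 1)⁻¹ * Real.log (∫ x : ℝ, P x ^ α * Q x ^ (1 - α))

lemma gaussPDF_exp (μ σ x : ℝ) (hσ : 0 < σ) :
    gaussPDF μ σ x
      = Real.exp (Real.log (Real.sqrt (2 * Real.pi * σ ^ 2))⁻¹ - (x - μ) ^ 2 / (2 * σ ^ 2)) := by
  have h : (0:ℝ) < 2 * Real.pi * σ ^ 2 := by positivity
  have hs : (0:ℝ) < (Real.sqrt (2 * Real.pi * σ ^ 2))⁻¹ := by positivity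
  rw [gaussPDF, Real.exp_sub, Real.exp_log hs, neg_div, Real.exp_neg]
  exact (div_eq_mul_inv _ _).symm

lemma integral_gaussPDF (μ σ : ℝ) (hσ : 0 < σ) : ∫ x : ℝ, gaussPDF μ σ x = 1 := by
  have h : (0:ℝ) < 2 * Real.pi * σ ^ 2 := by positivity
  have hb : (0:ℝ) < (2 * σ ^ 2)⁻¹ := by positivity
  have h1 : ∀ x : ℝ, gaussPDF μ σ x
      = (Real.sqrt (2 * Real.pi * σ ^ 2))⁻¹ * Real.exp (-(2 * σ ^ 2)⁻¹ * (x - μ) ^ 2) := by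
    intro x
    rw [gaussPDF]
    congr 1
    rw [neg_div, div_eq_inv_mul, neg_mul]
  simp_rw [h1]
  rw [MeasureTheory.integral_const_mul]
  have h2 : (∫ x : ℝ, Real.exp (-(2 * σ ^ 2)⁻¹ * (x - μ) ^ 2))
      = ∫ x : ℝ, Real.exp (-(2 * σ ^ 2)⁻¹ * x ^ 2) :=
    MeasureTheory.integral_sub_right_eq_self (fun x => Real.exp (-(2 * σ ^ 2)⁻¹ * x ^ 2)) μ
  rw [h2, integral_gaussian]
  have h3 : Real.pi / (2 * σ ^ 2)⁻¹ = 2 * Real.pi * σ ^ 2 := by field_simp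
  rw [h3, inv_mul_cancel₀ (by positivity)]

lemma prod_eq (α σ μ₀ μ₁ : ℝ) (hσ : 0 < σ) (x : ℝ) :
    gaussPDF μ₀ σ x ^ α * gaussPDF μ₁ σ x ^ (1 - α)
      = Real.exp (α * (α - 1) * (μ₀ - μ₁) ^ 2 / (2 * σ ^ 2)) *
        gaussPDF (α * μ₀ + (1 - α) * μ₁) σ x := by
  have hσ2 : (2 * σ ^ 2) ≠ 0 := by positivity
  rw [gaussPDF_exp μ₀ σ x hσ, gaussPDF_exp μ₁ σ x hσ,
    gaussPDF_exp (α * μ₀ + (1 - α) * μ₁) σ x hσ,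
    ← Real.exp_mul, ← Real.exp_mul, ← Real.exp_add, ← Real.exp_add]
  congr 1
  field_simp
  ring

lemma integral_prod (α σ μ₀ μ₁ : ℝ) (hσ : 0 < σ) :
    (∫ x : ℝ, gaussPDF μ₀ σ x ^ α * gaussPDF μ₁ σ x ^ (1 - α))
      = Real.exp (α * (α - 1) * (μ₀ - μ₁) ^ 2 / (2 * σ ^ 2)) := by
  simp_rw [prod_eq α σ μ₀ μ₁ hσ]
  rw [MeasureTheory.integral_const_mul, integral_gaussPDF _ _ hσ, mul_one]

/-- The Rényi divergence of order `α > 1` between `N(μ₀, σ²)` and `N(μ₁, σ²)` equals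
`α (μ₀ − μ₁)² / (2σ²)`; consequently, the Gaussian mechanism on a query `f` with
sensitivity `Δf` satisfies `(α, α Δf² / (2σ²))`-RDP. -/
theorem renyiDiv_gaussian_and_gaussian_mechanism_rdp {DB : Type*}
    (α σ : ℝ) (hα : 1 < α) (hσ : 0 < σ) :
    (∀ μ₀ μ₁ : ℝ,
        renyiDiv α (gaussPDF μ₀ σ) (gaussPDF μ₁ σ) = α * (μ₀ - μ₁) ^ 2 / (2 * σ ^ 2)) ∧
      (∀ (neighbor : DB → DB → Prop) (f : DB → ℝ) (Δf : ℝ)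
          (_ : ∀ D D', neighbor D D' → |f D - f D'| ≤ Δf)
          (D D' : DB), neighbor D D' →
          renyiDiv α (gaussPDF (f D) σ) (gaussPDF (f D') σ) ≤ α * Δf ^ 2 / (2 * σ ^ 2)) := by
  have hα1 : α - 1 ≠ 0 := by linarith
  have key : ∀ μ₀ μ₁ : ℝ,
      renyiDiv α (gaussPDF μ₀ σ) (gaussPDF μ₁ σ) = α * (μ₀ - μ₁) ^ 2 / (2 * σ ^ 2) := by
    intro μ₀ μ₁
    rw [renyiDiv, integral_prod α σ μ₀ μ₁ hσ, Real.log_exp]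
    field_simp
  refine ⟨key, ?_⟩
  intro neighbor f Δf hsens D D' hDD'
  rw [key]
  have h1 : |f D - f D'| ≤ Δf := hsens D D' hDD'
  have h2 : (f D - f D') ^ 2 ≤ Δf ^ 2 := by
    rw [← sq_abs]
    exact pow_le_pow_left₀ (abs_nonneg _) h1 2
  gcongr
end

section
/- Membership advantage bound under pure DP (Yeom et al.): for any membership inference adversary A against a mechanism (training algorithm) satisfying (ε, 0)-DP, the membership advantage Adv = TPR − FPR satisfies Adv ≤ e^ε − 1. -/
open MeasureTheory

def DiffPrivate {DB Ω : Type*} [MeasurableSpace Ω] (neighbor : DB → DB → Prop)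
    (M : DB → Measure Ω) (ε δ : ℝ) : Prop :=
  ∀ D D', neighbor D D' → ∀ O : Set Ω, MeasurableSet O →
    M D O ≤ ENNReal.ofReal (Real.exp ε) * M D' O + ENNReal.ofReal δ

/-- Membership advantage bound under pure DP (Yeom et al.):
for a membership inference adversary described by its acceptance set `A`,
with `TPR = Pr[M(Din) ∈ A]` (the training set includes the target record) and
`FPR = Pr[M(Dout) ∈ A]` (neighboring database excluding the record),
the membership advantage `TPR − FPR` is at most `e^ε − 1`. -/
theorem membership_advantage_bound_pure_dp {DB Ω : Type*} [MeasurableSpace Ω]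
    (neighbor : DB → DB → Prop) (M : DB → Measure Ω)
    [∀ D, IsProbabilityMeasure (M D)]
    (ε : ℝ) (hε : 0 ≤ ε) (hDP : DiffPrivate neighbor M ε 0)
    (Din Dout : DB) (hN : neighbor Din Dout)
    (A : Set Ω) (hA : MeasurableSet A) :
    (M Din A).toReal - (M Dout A).toReal ≤ Real.exp ε - 1 := by
  have hdp := hDP Din Dout hN A hA
  simp only [ENNReal.ofReal_zero, add_zero] at hdp
  have hfin : M Dout A ≠ ⊤ := (measure_ne_top _ _)
  have hfin' : M Din A ≠ ⊤ := (measure_ne_top _ _)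
  have ht : (M Din A).toReal ≤ Real.exp ε * (M Dout A).toReal := by
    have := ENNReal.toReal_mono (by
      exact ENNReal.mul_ne_top ENNReal.ofReal_ne_top hfin) hdp
    rwa [ENNReal.toReal_mul, ENNReal.toReal_ofReal (Real.exp_pos ε).le] at this
  have hf1 : (M Dout A).toReal ≤ 1 := by
    have := prob_le_one (μ := M Dout) (s := A)
    exact ENNReal.toReal_le_of_le_ofReal zero_le_one (by simpa using this)
  have hf0 : 0 ≤ (M Dout A).toReal := ENNReal.toReal_nonneg
  nlinarith [Real.one_le_exp hε]
end

section
/- For an (ε, δ)-DP mechanism, the membership advantage of any membership inference adversary satisfies Adv = TPR − FPR ≤ e^ε − 1 + δ. -/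
open MeasureTheory

/-- Membership advantage bound under `(ε, δ)`-DP:
`Adv = TPR − FPR ≤ e^ε − 1 + δ`. -/
theorem membership_advantage_bound_approx_dp {DB Ω : Type*} [MeasurableSpace Ω]
    (neighbor : DB → DB → Prop) (M : DB → Measure Ω)
    [∀ D, IsProbabilityMeasure (M D)]
    (ε δ : ℝ) (hε : 0 ≤ ε) (hδ : 0 ≤ δ) (hDP : DiffPrivate neighbor M ε δ)
    (Din Dout : DB) (hN : neighbor Din Dout)
    (A : Set Ω) (hA : MeasurableSet A) :
    (M Din A).toReal - (M Dout A).toReal ≤ Real.exp ε - 1 + δ := by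
  have h := hDP Din Dout hN A hA
  have hfin : M Din A ≠ ⊤ := measure_ne_top _ _
  have hfin' : M Dout A ≠ ⊤ := measure_ne_top _ _
  have h1 : (M Din A).toReal ≤ Real.exp ε * (M Dout A).toReal + δ := by
    have := ENNReal.toReal_mono (by
        exact ENNReal.add_ne_top.2 ⟨ENNReal.mul_ne_top ENNReal.ofReal_ne_top hfin',
          ENNReal.ofReal_ne_top⟩) h
    rwa [ENNReal.toReal_add (ENNReal.mul_ne_top ENNReal.ofReal_ne_top hfin')
        ENNReal.ofReal_ne_top, ENNReal.toReal_mul, ENNReal.toReal_ofReal (Real.exp_pos ε).le,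
        ENNReal.toReal_ofReal hδ] at this
  have h2 : (M Dout A).toReal ≤ 1 := by
    have := prob_le_one (μ := M Dout) (s := A)
    simpa using ENNReal.toReal_mono (by simp) this
  have h3 : 0 ≤ (M Dout A).toReal := ENNReal.toReal_nonneg
  nlinarith [Real.one_le_exp hε]
end
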